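/- Let d ≥ 1, n ≥ 1, u ∈ ℝ^d, and b < b' in ℝ. Define Ψ(Z; b, b') = ψ(Z; b) − ψ(Z; b'), where ψ(Z; c) = e^{(1)} (u^T Z) σ_H[(u^T Z)^T (u^T Z − c 1_n^T)]. Then all rows of Ψ(Z; b, b') other than the first row are zero, and for every j ∈ {1, …, n}: if b < u^T Z_{:,j} < b' then Ψ(Z; b, b')_{1,j} = max_k u^T Z_{:,k} − min_k u^T Z_{:,k}, and if u^T Z_{:,j} < b or u^T Z_{:,j} > b' then Ψ(Z; b, b')_{1,j} = 0. -/

import Mathlib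

open MeasureTheory Matrix Filter
open scoped Classical

noncomputable section

/-- `d × n` real matrices: an input sequence of `n` tokens with embedding dimension `d`. -/
abbrev Mat (d n : ℕ) := Matrix (Fin d) (Fin n) ℝ
/-- Column-wise hardmax operator: in each column, puts mass `1/k` on its `k` maximizing
entries and `0` elsewhere. -/
def hardmax {n : ℕ} (A : Matrix (Fin n) (Fin n) ℝ) : Matrix (Fin n) (Fin n) ℝ :=
  Matrix.of fun i j =>
    if (∀ k, A k j ≤ A i j) then
      ((Finset.univ.filter fun i' => ∀ k, A k j ≤ A i' j).card : ℝ)⁻¹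
    else 0

/-!
With `r = uᵀZ`, column `j` of `rᵀ(r − c 1ᵀ)` is `r` scaled by `r j − c`. Its hardmax is the
uniform distribution on the maximizers of `r` when `r j > c` and on its minimizers when
`r j < c`, so `ψ(Z; c)_{1,j}` is `max r` or `min r` according to the sign of `r j − c`.
The two thresholds give different signs when `b < r j < b'` and equal signs when `r j`
lies outside `[b, b']`.
-/

open Finset

lemma vecMulVec_mul_apply {l m o α : Type*} [Fintype m] [NonUnitalSemiring α]
    (x : l → α) (y : m → α) (M : Matrix m o α) (i : l) (j : o) :
    (vecMulVec x y * M) i j = x i * (y ᵥ* M) j := by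
  rw [vecMulVec_mul, vecMulVec_apply]

lemma vecMul_hardmax_apply_eq {n : ℕ} (hne : (univ : Finset (Fin n)).Nonempty)
    (A : Matrix (Fin n) (Fin n) ℝ) (r : Fin n → ℝ) (j : Fin n) {M : ℝ}
    (hM : ∀ k, (∀ k', A k' j ≤ A k j) → r k = M) :
    (r ᵥ* hardmax A) j = M := by
  set S := univ.filter fun k => ∀ k', A k' j ≤ A k j
  obtain ⟨m, -, hm⟩ := exists_max_image univ (fun k => A k j) hne
  have hS : (#S : ℝ) ≠ 0 := by
    have : m ∈ S := mem_filter.mpr ⟨mem_univ _, fun k' => hm k' (mem_univ _)⟩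
    exact_mod_cast (card_pos.mpr ⟨m, this⟩).ne'
  calc (r ᵥ* hardmax A) j = ∑ k ∈ S, M * (#S : ℝ)⁻¹ := by
        rw [vecMul, dotProduct, sum_filter]
        refine sum_congr rfl fun k _ => ?_
        simp only [hardmax, of_apply, mul_ite, mul_zero]
        split_ifs with h
        · rw [hM k h]
        · rfl
    _ = M := by rw [sum_const, nsmul_eq_mul, mul_left_comm, mul_inv_cancel₀ hS, mul_one]

lemma vecMul_hardmax_apply_of_pos {n : ℕ} (hne : (univ : Finset (Fin n)).Nonempty)
    (A : Matrix (Fin n) (Fin n) ℝ) (r : Fin n → ℝ) (j : Fin n) {t : ℝ} (ht : 0 < t)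
    (hA : ∀ k, A k j = r k * t) :
    (r ᵥ* hardmax A) j = univ.sup' hne r :=
  vecMul_hardmax_apply_eq hne A r j fun k hk =>
    le_antisymm (le_sup' r (mem_univ k)) <| sup'_le _ _ fun k' _ => by
      simpa only [hA, mul_le_mul_iff_of_pos_right ht] using hk k'

lemma vecMul_hardmax_apply_of_neg {n : ℕ} (hne : (univ : Finset (Fin n)).Nonempty)
    (A : Matrix (Fin n) (Fin n) ℝ) (r : Fin n → ℝ) (j : Fin n) {t : ℝ} (ht : t < 0)
    (hA : ∀ k, A k j = r k * t) :
    (r ᵥ* hardmax A) j = univ.inf' hne r :=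
  vecMul_hardmax_apply_eq hne A r j fun k hk =>
    le_antisymm (le_inf' _ _ fun k' _ => by
      simpa only [hA, mul_le_mul_right_of_neg ht] using hk k') (inf'_le r (mem_univ k))

lemma vecMul_hardmax_shiftScores_of_lt {n : ℕ} (hne : (univ : Finset (Fin n)).Nonempty)
    (r : Fin n → ℝ) {c : ℝ} {j : Fin n} (h : c < r j) :
    (r ᵥ* hardmax (of fun k j' => r k * (r j' - c))) j = univ.sup' hne r :=
  vecMul_hardmax_apply_of_pos hne _ r j (sub_pos.mpr h) fun _ => rfl

lemma vecMul_hardmax_shiftScores_of_gt {n : ℕ} (hne : (univ : Finset (Fin n)).Nonempty)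
    (r : Fin n → ℝ) {c : ℝ} {j : Fin n} (h : r j < c) :
    (r ᵥ* hardmax (of fun k j' => r k * (r j' - c))) j = univ.inf' hne r :=
  vecMul_hardmax_apply_of_neg hne _ r j (sub_neg.mpr h) fun _ => rfl

theorem stmt_12_general (d n : ℕ) (hn : 1 ≤ n) (u : Fin d → ℝ) (b b' : ℝ)
    (hb : b < b') (Z : Mat d n) :
    let r : Fin n → ℝ := fun j => ∑ i, u i * Z i j
    let e1 : Fin d → ℝ := fun i => if (i : ℕ) = 0 then 1 else 0
    let psi : ℝ → Mat d n := fun c =>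
      Matrix.vecMulVec e1 r * hardmax (Matrix.of fun j j' : Fin n => r j * (r j' - c))
    let Psi : Mat d n := psi b - psi b'
    (∀ (i : Fin d) (j : Fin n), (i : ℕ) ≠ 0 → Psi i j = 0) ∧
    (∀ (i : Fin d) (j : Fin n), (i : ℕ) = 0 → b < r j → r j < b' →
      Psi i j = Finset.univ.sup' (Finset.univ_nonempty_iff.mpr ⟨⟨0, hn⟩⟩) r
        - Finset.univ.inf' (Finset.univ_nonempty_iff.mpr ⟨⟨0, hn⟩⟩) r) ∧
    (∀ (i : Fin d) (j : Fin n), (i : ℕ) = 0 → (r j < b ∨ b' < r j) →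
      Psi i j = 0) := by
  intro r e1 psi Psi
  have hne : (univ : Finset (Fin n)).Nonempty := univ_nonempty_iff.mpr ⟨⟨0, hn⟩⟩
  have hPsi : ∀ i j, Psi i j = e1 i *
      ((r ᵥ* hardmax (of fun k j' => r k * (r j' - b))) j -
        (r ᵥ* hardmax (of fun k j' => r k * (r j' - b'))) j) := fun i j =>
    (congrArg₂ (· - ·) (vecMulVec_mul_apply e1 r _ i j) (vecMulVec_mul_apply e1 r _ i j)).trans
      (mul_sub ..).symm
  refine ⟨fun i j hi => by simp [hPsi, e1, hi], fun i j hi h h' => ?_, fun i j hi h => ?_⟩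
  · rw [hPsi, vecMul_hardmax_shiftScores_of_lt hne r h,
      vecMul_hardmax_shiftScores_of_gt hne r h']
    simp [e1, hi]
  · rcases h with h | h
    · rw [hPsi, vecMul_hardmax_shiftScores_of_gt hne r h,
        vecMul_hardmax_shiftScores_of_gt hne r (h.trans hb), sub_self, mul_zero]
    · rw [hPsi, vecMul_hardmax_shiftScores_of_lt hne r h,
        vecMul_hardmax_shiftScores_of_lt hne r (hb.trans h), sub_self, mul_zero]

/-- Properties of the selective shift operation
`Ψ(Z; b, b') = ψ(Z; b) − ψ(Z; b')` with
`ψ(Z; c) = e⁽¹⁾ (uᵀZ) σ_H[(uᵀZ)ᵀ(uᵀZ − c·1ₙᵀ)]`: all rows but the first vanish;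
on the first row, entries `j` with `b < uᵀZ_{:,j} < b'` equal
`max_k uᵀZ_{:,k} − min_k uᵀZ_{:,k}` and entries with `uᵀZ_{:,j} < b` or
`uᵀZ_{:,j} > b'` equal `0`. -/
theorem stmt_12 (d n : ℕ) (hd : 1 ≤ d) (hn : 1 ≤ n) (u : Fin d → ℝ) (b b' : ℝ)
    (hb : b < b') (Z : Mat d n) :
    let r : Fin n → ℝ := fun j => ∑ i, u i * Z i j
    let e1 : Fin d → ℝ := fun i => if (i : ℕ) = 0 then 1 else 0
    let psi : ℝ → Mat d n := fun c =>
      Matrix.vecMulVec e1 r * hardmax (Matrix.of fun j j' : Fin n => r j * (r j' - c))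
    let Psi : Mat d n := psi b - psi b'
    (∀ (i : Fin d) (j : Fin n), (i : ℕ) ≠ 0 → Psi i j = 0) ∧
    (∀ (i : Fin d) (j : Fin n), (i : ℕ) = 0 → b < r j → r j < b' →
      Psi i j = Finset.univ.sup' (Finset.univ_nonempty_iff.mpr ⟨⟨0, hn⟩⟩) r
        - Finset.univ.inf' (Finset.univ_nonempty_iff.mpr ⟨⟨0, hn⟩⟩) r) ∧
    (∀ (i : Fin d) (j : Fin n), (i : ℕ) = 0 → (r j < b ∨ b' < r j) →
      Psi i j = 0) :=
  stmt_12_general d n hn u b b' hb Z
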